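/- arXiv:1211.1848 — 2 statements merged into one kernel-verified Lean document; each statement's English description precedes it below -/
import Mathlib

section
/- Let n ≥ 2 and let P be a harmonic homogeneous polynomial of degree N on ℝⁿ with complex coefficients, with associated polynomial Q ∈ ℂ[η₁,…,η_n]. If Q(η) = 0 for every η ∈ ℂⁿ such that σ_{n−1}(η²) vanishes at η and every component η_j is nonzero (equivalently, if the Laplace transform P̂ vanishes identically on the variety {ρ·ρ = 0}), then σ_{n−1}(η²) divides Q in ℂ[η₁,…,η_n]. -/
/-!
The polynomial `σ = σ_{n-1}(η²)` is squarefree: a prime `p` with `p² ∣ σ` divides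
`∂ᵢσ = 2 ηᵢ Tᵢ`, where `σ = ηᵢ² Tᵢ + ∏_{k ≠ i} ηₖ²`, hence divides `Tᵢ` and then `∏_{k ≠ i} ηₖ²`,
so it is associated to some `ηₖ`; but no `ηₖ` divides `σ`. The product `(∏ₖ ηₖ) · Q` vanishes on
the whole zero set of `σ`, and by the Nullstellensatz a squarefree polynomial divides every
polynomial vanishing on its zero set; finally `σ` is coprime to `∏ₖ ηₖ`.
-/

open MvPolynomial

/-- The polynomial `Q(η) = Σ_{|α|=N} α! p_α η^{α+1}` associated to a polynomial
`P(x) = Σ p_α x^α`. -/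
noncomputable def assocPoly (n : ℕ) (P : MvPolynomial (Fin n) ℂ) : MvPolynomial (Fin n) ℂ :=
  ∑ α ∈ P.support,
    monomial (α + Finsupp.equivFunOnFinite.symm fun _ => 1)
      ((∏ j, ((α j).factorial : ℂ)) * P.coeff α)

/-- `σ_{n-1}(η²) = Σᵢ ∏_{j≠i} ηⱼ²`. -/
noncomputable def sigmaSq (n : ℕ) : MvPolynomial (Fin n) ℂ :=
  ∑ i : Fin n, ∏ j ∈ Finset.univ.erase i, (X j) ^ 2

theorem MvPolynomial.dvd_of_forall_eval_eq_zero {σ K : Type*} [Field K] [IsAlgClosed K]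
    [Finite σ] {f g : MvPolynomial σ K} (hf : Squarefree f)
    (h : ∀ x : σ → K, eval x f = 0 → eval x g = 0) : f ∣ g := by
  have hg : g ∈ vanishingIdeal K (zeroLocus K (Ideal.span {f})) := by
    rw [mem_vanishingIdeal_iff]
    intro x hx
    exact h x (mem_zeroLocus_iff.mp hx f (Ideal.mem_span_singleton_self f))
  rw [vanishingIdeal_zeroLocus_eq_radical] at hg
  obtain ⟨k, hk⟩ := hg
  exact hf.isRadical k g (Ideal.mem_span_singleton.mp hk)

theorem MvPolynomial.pderiv_prod_X_sq_of_notMem {σ R : Type*} [CommSemiring R] {i : σ}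
    {s : Finset σ} (hi : i ∉ s) : pderiv i (∏ k ∈ s, (X k : MvPolynomial σ R) ^ 2) = 0 := by
  classical
  induction s using Finset.induction_on with
  | empty => simp
  | insert k s hk ih =>
    rw [Finset.mem_insert, not_or] at hi
    rw [Finset.prod_insert hk, pderiv_mul, ih hi.2, pderiv_pow, pderiv_X_of_ne (Ne.symm hi.1)]
    simp

theorem MvPolynomial.dvd_pderiv_of_mul_self_dvd {σ R : Type*} [CommSemiring R]
    {p f : MvPolynomial σ R} (i : σ) (h : p * p ∣ f) : p ∣ pderiv i f := by
  obtain ⟨g, rfl⟩ := h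
  rw [mul_assoc, pderiv_mul]
  exact dvd_add (dvd_mul_of_dvd_right (dvd_mul_right p g) _) (dvd_mul_right p _)

section

variable {n : ℕ}

noncomputable def sigmaSqCofactor (n : ℕ) (i : Fin n) : MvPolynomial (Fin n) ℂ :=
  ∑ j ∈ Finset.univ.erase i, ∏ k ∈ (Finset.univ.erase j).erase i, X k ^ 2

theorem sigmaSq_eq_X_sq_mul_add (i : Fin n) :
    sigmaSq n = X i ^ 2 * sigmaSqCofactor n i + ∏ k ∈ Finset.univ.erase i, X k ^ 2 := by
  rw [sigmaSq, ← Finset.add_sum_erase _ _ (Finset.mem_univ i), add_comm, sigmaSqCofactor,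
    Finset.mul_sum]
  congr 1
  exact Finset.sum_congr rfl fun j hj => (Finset.mul_prod_erase _ (fun k => X k ^ 2)
    (Finset.mem_erase.mpr ⟨(Finset.ne_of_mem_erase hj).symm, Finset.mem_univ i⟩)).symm

theorem pderiv_sigmaSqCofactor (i : Fin n) : pderiv i (sigmaSqCofactor n i) = 0 := by
  rw [sigmaSqCofactor, map_sum]
  exact Finset.sum_eq_zero fun j _ => pderiv_prod_X_sq_of_notMem (Finset.notMem_erase i _)

theorem pderiv_sigmaSq (i : Fin n) : pderiv i (sigmaSq n) = 2 * X i * sigmaSqCofactor n i := by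
  rw [sigmaSq_eq_X_sq_mul_add i, map_add, pderiv_prod_X_sq_of_notMem (Finset.notMem_erase i _),
    pderiv_mul, pderiv_sigmaSqCofactor, pderiv_pow, pderiv_X_self]
  ring

theorem eval_sigmaSq_ite_ne_zero (j : Fin n) :
    eval (fun k => if k = j then 0 else 1) (sigmaSq n) ≠ 0 := by
  rw [sigmaSq, map_sum, Finset.sum_eq_single j]
  · simp
  · intro i _ hij
    simp [Ne.symm hij]
  · simp

theorem X_not_dvd_sigmaSq (j : Fin n) : ¬ X j ∣ sigmaSq n := by
  rintro ⟨g, hg⟩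
  apply eval_sigmaSq_ite_ne_zero j
  simp [hg]

theorem isRelPrime_sigmaSq_prod_X : IsRelPrime (sigmaSq n) (∏ j, X j) :=
  IsRelPrime.prod_right fun j _ =>
    ((X_prime.irreducible.isRelPrime_iff_not_dvd).mpr (X_not_dvd_sigmaSq j)).symm

theorem not_dvd_sigmaSq_of_dvd_X {p : MvPolynomial (Fin n) ℂ} (hp : Prime p) {j : Fin n}
    (hpj : p ∣ X j) : ¬ p ∣ sigmaSq n := fun hpσ =>
  X_not_dvd_sigmaSq j ((hp.associated_of_dvd X_prime hpj).symm.dvd.trans hpσ)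

theorem squarefree_sigmaSq (hn : 0 < n) : Squarefree (sigmaSq n) := by
  let i : Fin n := ⟨0, hn⟩
  have hσ : sigmaSq n ≠ 0 := fun h => eval_sigmaSq_ite_ne_zero i (by rw [h, map_zero])
  refine (squarefree_iff_irreducible_sq_not_dvd_of_ne_zero hσ).mpr fun p hirr hpp => ?_
  have hp : Prime p := hirr.prime
  have hpσ : p ∣ sigmaSq n := (dvd_mul_right p p).trans hpp
  have h2 : ¬ p ∣ 2 := fun h => hp.not_isUnit (isUnit_of_dvd_unit h
    (map_ofNat (C : ℂ →+* MvPolynomial (Fin n) ℂ) 2 ▸ (IsUnit.mk0 (2 : ℂ) two_ne_zero).map C))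
  have hX : ¬ p ∣ X i := fun h => not_dvd_sigmaSq_of_dvd_X hp h hpσ
  have hpT : p ∣ sigmaSqCofactor n i := by
    have hpσ' := dvd_pderiv_of_mul_self_dvd i hpp
    rw [pderiv_sigmaSq, mul_assoc] at hpσ'
    exact (hp.dvd_or_dvd ((hp.dvd_or_dvd hpσ').resolve_left h2)).resolve_left hX
  have hM : p ∣ ∏ k ∈ Finset.univ.erase i, X k ^ 2 := by
    rw [eq_sub_of_add_eq' (sigmaSq_eq_X_sq_mul_add i).symm]
    exact dvd_sub hpσ (hpT.mul_left _)
  obtain ⟨j, -, hj⟩ := hp.exists_mem_finset_dvd hM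
  exact not_dvd_sigmaSq_of_dvd_X hp (hp.dvd_of_dvd_pow hj) hpσ

end

theorem sigmaSq_dvd_of_vanishing_general
    (n : ℕ) (hn : 2 ≤ n) (P : MvPolynomial (Fin n) ℂ)
    (hvan : ∀ η : Fin n → ℂ, eval η (sigmaSq n) = 0 → (∀ j, η j ≠ 0) →
      eval η (assocPoly n P) = 0) :
    sigmaSq n ∣ assocPoly n P := by
  refine isRelPrime_sigmaSq_prod_X.dvd_of_dvd_mul_left
    (dvd_of_forall_eval_eq_zero (squarefree_sigmaSq (by omega)) fun η hη => ?_)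
  by_cases hz : ∀ j, η j ≠ 0
  · rw [map_mul, hvan η hη hz, mul_zero]
  · obtain ⟨j, hj⟩ := not_forall_not.mp hz
    rw [map_mul, map_prod, Finset.prod_eq_zero (Finset.mem_univ j) (by rw [eval_X, hj]), zero_mul]

/-- If the associated polynomial `Q` of a harmonic homogeneous polynomial `P` vanishes at
every point of the variety `{σ_{n-1}(η²) = 0}` with all coordinates nonzero (equivalently,
if the Laplace transform `P̂` vanishes identically on `{ρ·ρ = 0}`), then `σ_{n-1}(η²)`
divides `Q`. -/
theorem sigmaSq_dvd_of_vanishing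
    (n N : ℕ) (hn : 2 ≤ n) (P : MvPolynomial (Fin n) ℂ)
    (hPhom : P.IsHomogeneous N)
    (hPharm : ∑ j : Fin n, pderiv j (pderiv j P) = 0)
    (hvan : ∀ η : Fin n → ℂ, eval η (sigmaSq n) = 0 → (∀ j, η j ≠ 0) →
      eval η (assocPoly n P) = 0) :
    sigmaSq n ∣ assocPoly n P :=
  sigmaSq_dvd_of_vanishing_general n hn P hvan
end

section
/- Let n ≥ 2 and let Q, P_î, Q_î (i = 1,…,n) be polynomials in ℂ[η₁,…,η_n] such that each P_î and Q_î is independent of the variable η_i and σ_{n−1}(η²)·Q = σ_n(η)·Σ_{i=1}^n (P_î + η_i Q_î). If σ_{n−1}(η²) divides Q in ℂ[η₁,…,η_n], then Q = 0. -/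
/-!
Write `Q = σ_{n-1}(η²) · R`, so that `σ_{n-1}(η²)² · R = σ_n(η) · S` where every monomial of
`S = Σᵢ (P_î + ηᵢ Q_î)` has degree at most one in some variable. Comparing the coefficients of
the top power of `η₁` on both sides reproduces this situation in `n - 1` variables for the
leading coefficient of `R`, so it suffices to treat `n = 2`. There, multiplying by `xy` gives
`(x² + y²)² U = x² y² S`, and the coefficients `u a b` of `xᵃ yᵇ` in `U` vanish for `a ≤ 1` or
`b ≤ 1` and satisfy `u a (b + 4) + 2 u (a + 2) (b + 2) + u (a + 4) b = 0` (the coefficient of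
`x^(a+4) y^(b+4)` in `x² y² S` vanishes). Along an antidiagonal of fixed parity the recurrence
says that `(-1)ᵏ u` has vanishing second differences, so it is linear there; as it vanishes at both
ends of the antidiagonal, it vanishes identically.
-/

open MvPolynomial

/-- `σₙ(η) = ∏ⱼ ηⱼ`. -/
noncomputable def sigmaN (n : ℕ) : MvPolynomial (Fin n) ℂ :=
  ∏ j : Fin n, X j

/-- A polynomial is independent of the variable `i` if no monomial of it contains that
variable. -/
def IndepOf {n : ℕ} (i : Fin n) (p : MvPolynomial (Fin n) ℂ) : Prop :=
  ∀ d ∈ p.support, d i = 0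

noncomputable def lowInSomeVar (σ R : Type*) [CommSemiring R] : Submodule R (MvPolynomial σ R) :=
  restrictSupport R {d | ∃ i, d i ≤ 1}

section Recurrence

variable {K : Type*} [CommRing K]

lemma eq_neg_one_pow_mul_of_recurrence (h : ℕ → ℕ → K) (h_left : ∀ m, h 0 m = 0)
    (hrec : ∀ k m, h k (m + 2) + 2 * h (k + 1) (m + 1) + h (k + 2) m = 0) (k m : ℕ) :
    h (k + 1) m = (-1) ^ k * (k + 1) * h 1 (m + k) := by
  induction k using Nat.twoStepInduction generalizing m with
  | zero => simp
  | one => linear_combination hrec 0 m - h_left (m + 2)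
  | more k ih₀ ih₁ =>
    have h₀ := ih₀ (m + 2)
    have h₁ := ih₁ (m + 1)
    rw [show m + 2 + k = m + (k + 2) by omega] at h₀
    rw [show m + 1 + (k + 1) = m + (k + 2) by omega] at h₁
    push_cast at h₁ ⊢
    linear_combination hrec (k + 1) m - h₀ - 2 * h₁

variable [IsDomain K] [CharZero K]

lemma eq_zero_of_recurrence (h : ℕ → ℕ → K) (h_left : ∀ m, h 0 m = 0) (h_bot : ∀ k, h k 0 = 0)
    (hrec : ∀ k m, h k (m + 2) + 2 * h (k + 1) (m + 1) + h (k + 2) m = 0) (k m : ℕ) :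
    h k m = 0 := by
  have h_one (m : ℕ) : h 1 m = 0 := by
    have := eq_neg_one_pow_mul_of_recurrence h h_left hrec m 0
    rw [h_bot, zero_add, eq_comm] at this
    simpa [Nat.cast_add_one_ne_zero] using this
  cases k with
  | zero => exact h_left m
  | succ k => rw [eq_neg_one_pow_mul_of_recurrence h h_left hrec, h_one, mul_zero]

lemma eq_zero_of_recurrence_two (u : ℕ → ℕ → K) (h_left : ∀ a b, a ≤ 1 → u a b = 0)
    (h_bot : ∀ a b, b ≤ 1 → u a b = 0)
    (hrec : ∀ a b, u a (b + 4) + 2 * u (a + 2) (b + 2) + u (a + 4) b = 0) (a b : ℕ) :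
    u a b = 0 := by
  have := eq_zero_of_recurrence (fun k m ↦ u (a % 2 + 2 * k) (b % 2 + 2 * m))
    (fun m ↦ h_left _ _ (by omega)) (fun k ↦ h_bot _ _ (by omega))
    (fun k m ↦ by simpa only [mul_add, add_assoc] using hrec (a % 2 + 2 * k) (b % 2 + 2 * m))
    (a / 2) (b / 2)
  simpa only [Nat.mod_add_div] using this

end Recurrence

section TwoVariables

variable {K : Type*} [CommRing K]

lemma eq_single_zero_add_single_one (d : Fin 2 →₀ ℕ) :
    d = Finsupp.single 0 (d 0) + Finsupp.single 1 (d 1) := by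
  ext i; fin_cases i <;> simp

lemma coeff_X_pow_mul_X_pow_mul (a b c d : ℕ) (p : MvPolynomial (Fin 2) K) :
    coeff (Finsupp.single 0 a + Finsupp.single 1 b) (X 0 ^ c * X 1 ^ d * p) =
      if c ≤ a ∧ d ≤ b then coeff (Finsupp.single 0 (a - c) + Finsupp.single 1 (b - d)) p
      else 0 := by
  have hsub : Finsupp.single 0 a + Finsupp.single 1 b - (Finsupp.single 0 c + Finsupp.single 1 d)
      = Finsupp.single (0 : Fin 2) (a - c) + Finsupp.single 1 (b - d) := by
    ext i; fin_cases i <;> simp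
  rw [X_pow_eq_monomial, X_pow_eq_monomial, monomial_mul, one_mul, coeff_monomial_mul', hsub]
  simp [Finsupp.le_def, Fin.forall_fin_two]

lemma eq_zero_of_sq_add_sq_sq_mul_eq [IsDomain K] [CharZero K] {U S : MvPolynomial (Fin 2) K}
    (hS : S ∈ lowInSomeVar (Fin 2) K) (h : (X 0 ^ 2 + X 1 ^ 2) ^ 2 * U = X 0 ^ 2 * X 1 ^ 2 * S) :
    U = 0 := by
  have hT (a b : ℕ) := congrArg (coeff (Finsupp.single 0 a + Finsupp.single 1 b)) h
  rw [show (X 0 ^ 2 + X 1 ^ 2) ^ 2 * U = X 0 ^ 4 * X 1 ^ 0 * U + X 0 ^ 2 * X 1 ^ 2 * U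
    + X 0 ^ 2 * X 1 ^ 2 * U + X 0 ^ 0 * X 1 ^ 4 * U by ring] at hT
  simp only [coeff_add, coeff_X_pow_mul_X_pow_mul] at hT
  have hS_coeff (a b : ℕ) :
      coeff (Finsupp.single 0 (a + 2) + Finsupp.single 1 (b + 2)) S = 0 := by
    by_contra hne
    obtain ⟨i, hi⟩ := hS (mem_support_iff.mpr hne)
    fin_cases i <;> simp at hi
  ext d
  rw [eq_single_zero_add_single_one d, coeff_zero]
  apply eq_zero_of_recurrence_two fun a b ↦ coeff (Finsupp.single 0 a + Finsupp.single 1 b) U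
  · intro a b ha
    simpa (disch := omega) only [if_pos, if_neg, add_zero, zero_add, Nat.add_sub_cancel,
      Nat.sub_zero] using hT a (b + 4)
  · intro a b hb
    simpa (disch := omega) only [if_pos, if_neg, add_zero, zero_add, Nat.add_sub_cancel,
      Nat.sub_zero] using hT (a + 4) b
  · intro a b
    have := hT (a + 4) (b + 4)
    simp (disch := omega) only [if_pos, Nat.add_sub_cancel, Nat.reduceSubDiff] at this
    linear_combination this + hS_coeff a b

end TwoVariables

lemma sigmaSq_eq_sum_prod_ite (n : ℕ) :
    sigmaSq n = ∑ i : Fin n, ∏ j, if j = i then 1 else X j ^ 2 := by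
  simp only [sigmaSq, ← Finset.filter_ne', Finset.prod_filter, ite_not]

lemma sigmaSq_two : sigmaSq 2 = X 0 ^ 2 + X 1 ^ 2 := by
  simp [sigmaSq_eq_sum_prod_ite, Fin.sum_univ_two, Fin.prod_univ_two, add_comm]

lemma sigmaN_two : sigmaN 2 = X 0 * X 1 := Fin.prod_univ_two _

lemma finSuccEquiv_sigmaSq (n : ℕ) :
    finSuccEquiv ℂ n (sigmaSq (n + 1)) =
      Polynomial.C (∏ i, X i ^ 2) + Polynomial.C (sigmaSq n) * Polynomial.X ^ 2 := by
  simp only [sigmaSq_eq_sum_prod_ite, Fin.sum_univ_succ, Fin.prod_univ_succ, if_true,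
    Fin.succ_ne_zero, (Fin.succ_ne_zero _).symm, if_false, Fin.succ_inj, one_mul]
  simp only [map_add, map_sum, map_mul, map_prod, map_pow, apply_ite, map_one,
    finSuccEquiv_X_zero, finSuccEquiv_X_succ, mul_comm, Finset.mul_sum]

lemma finSuccEquiv_sigmaN (n : ℕ) :
    finSuccEquiv ℂ n (sigmaN (n + 1)) = Polynomial.X * Polynomial.C (sigmaN n) := by
  rw [sigmaN, Fin.prod_univ_succ, map_mul, finSuccEquiv_X_zero, map_prod]
  simp only [finSuccEquiv_X_succ, ← map_prod, sigmaN]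

lemma finSuccEquiv_coeff_mem_lowInSomeVar {R : Type*} [CommSemiring R] {n k : ℕ} (hk : 2 ≤ k)
    {S : MvPolynomial (Fin (n + 1)) R} (hS : S ∈ lowInSomeVar (Fin (n + 1)) R) :
    (finSuccEquiv R n S).coeff k ∈ lowInSomeVar (Fin n) R := by
  rw [lowInSomeVar, mem_restrictSupport_iff] at hS ⊢
  intro d hd
  rw [Finset.mem_coe, mem_support_iff, finSuccEquiv_coeff_coeff] at hd
  obtain ⟨i, hi⟩ := hS (mem_support_iff.mpr hd)
  induction i using Fin.cases with
  | zero => rw [Finsupp.cons_zero] at hi; omega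
  | succ j => exact ⟨j, by simpa using hi⟩

lemma IndepOf.mem_lowInSomeVar {n : ℕ} {i : Fin n} {p : MvPolynomial (Fin n) ℂ}
    (hp : IndepOf i p) : p ∈ lowInSomeVar (Fin n) ℂ :=
  fun d hd ↦ ⟨i, (hp d hd).trans_le zero_le_one⟩

lemma IndepOf.X_mul_mem_lowInSomeVar {n : ℕ} {i : Fin n} {q : MvPolynomial (Fin n) ℂ}
    (hq : IndepOf i q) : X i * q ∈ lowInSomeVar (Fin n) ℂ := by
  rw [lowInSomeVar, mem_restrictSupport_iff]
  intro d hd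
  rw [Finset.mem_coe, mem_support_iff, coeff_X_mul'] at hd
  split_ifs at hd
  · have := hq _ (mem_support_iff.mpr hd)
    exact ⟨i, by rw [Finsupp.tsub_apply, Finsupp.single_eq_same] at this; omega⟩
  · exact (hd rfl).elim

lemma eq_zero_of_sigmaSq_sq_mul_eq_succ {n : ℕ}
    (ih : ∀ R S : MvPolynomial (Fin n) ℂ, S ∈ lowInSomeVar (Fin n) ℂ →
      sigmaSq n ^ 2 * R = sigmaN n * S → R = 0)
    {R S : MvPolynomial (Fin (n + 1)) ℂ} (hS : S ∈ lowInSomeVar (Fin (n + 1)) ℂ)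
    (h : sigmaSq (n + 1) ^ 2 * R = sigmaN (n + 1) * S) : R = 0 := by
  set e := finSuccEquiv ℂ n
  set F := e (sigmaSq (n + 1)) with hF
  rw [finSuccEquiv_sigmaSq] at hF
  have hF_deg : F.natDegree ≤ 2 := by rw [hF]; compute_degree
  have hF_coeff : F.coeff 2 = sigmaSq n := by
    simp only [hF, Polynomial.coeff_add, Polynomial.coeff_C_mul, Polynomial.coeff_X_pow,
      Polynomial.coeff_C]
    simp
  have h_top : sigmaSq n ^ 2 * (e R).leadingCoeff =
      sigmaN n * (e S).coeff ((e R).natDegree + 3) := by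
    have := congrArg (fun p ↦ (e p).coeff (2 * 2 + (e R).natDegree)) h
    simp only [map_mul, map_pow] at this
    rwa [Polynomial.coeff_mul_add_eq_of_natDegree_le
        (Polynomial.natDegree_pow_le_of_le 2 hF_deg) le_rfl,
      Polynomial.coeff_pow_of_natDegree_le hF_deg, hF_coeff, finSuccEquiv_sigmaN, mul_assoc,
      show 2 * 2 + (e R).natDegree = (e R).natDegree + 3 + 1 by ring, Polynomial.coeff_X_mul,
      Polynomial.coeff_C_mul] at this
  have := ih _ _ (finSuccEquiv_coeff_mem_lowInSomeVar (by omega) hS) h_top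
  rwa [Polynomial.leadingCoeff_eq_zero, map_eq_zero_iff e e.injective] at this

theorem eq_zero_of_sigmaSq_sq_mul_eq {n : ℕ} (hn : 2 ≤ n) {R S : MvPolynomial (Fin n) ℂ}
    (hS : S ∈ lowInSomeVar (Fin n) ℂ) (h : sigmaSq n ^ 2 * R = sigmaN n * S) : R = 0 := by
  induction n, hn using Nat.le_induction with
  | base =>
    rw [sigmaSq_two, sigmaN_two] at h
    have hxy : X 0 * X 1 * R = 0 :=
      eq_zero_of_sq_add_sq_sq_mul_eq hS (by linear_combination X 0 * X 1 * h)
    exact (mul_eq_zero.mp hxy).resolve_left (mul_ne_zero (X_ne_zero _) (X_ne_zero _))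
  | succ n _ ih => exact eq_zero_of_sigmaSq_sq_mul_eq_succ (fun _ _ ↦ ih) hS h

/-- `σ_{n-1}(η²)` cannot divide a nonzero polynomial `Q` satisfying
`σ_{n-1}(η²)·Q = σₙ(η)·Σᵢ (P_î + ηᵢ Q_î)` with `P_î, Q_î` independent of `ηᵢ`. -/
theorem eq_zero_of_sigmaSq_dvd
    (n : ℕ) (hn : 2 ≤ n) (Q : MvPolynomial (Fin n) ℂ)
    (Pi Qi : Fin n → MvPolynomial (Fin n) ℂ)
    (hPi : ∀ i, IndepOf i (Pi i)) (hQi : ∀ i, IndepOf i (Qi i))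
    (heq : sigmaSq n * Q = sigmaN n * ∑ i : Fin n, (Pi i + X i * Qi i))
    (hdvd : sigmaSq n ∣ Q) : Q = 0 := by
  obtain ⟨R, rfl⟩ := hdvd
  have hS : ∑ i : Fin n, (Pi i + X i * Qi i) ∈ lowInSomeVar (Fin n) ℂ :=
    Submodule.sum_mem _ fun i _ ↦
      Submodule.add_mem _ (hPi i).mem_lowInSomeVar (hQi i).X_mul_mem_lowInSomeVar
  rw [eq_zero_of_sigmaSq_sq_mul_eq (R := R) hn hS (by rw [← heq]; ring), mul_zero]
end
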